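/- arXiv:1310.6289 — 2 statements merged into one kernel-verified Lean document; each statement's English description precedes it below -/
import Mathlib

section
/- Let k ∈ ℕ and let a group G act on a simplicial tree T by graph automorphisms. Suppose the action is k-acylindrical in the sense of Sela. Then the action is acylindrical: for every ε ∈ ℕ, for all vertices x, y with d(x,y) > k + 2ε + 2, the set {g ∈ G : d(x, g·x) ≤ ε and d(y, g·y) ≤ ε} has fewer than 2(2ε+1) elements. -/
/-!
Choose `u` and `v` on the geodesic `[x, y]` at distances `ε` and `ε + k + 1` from `x`. An element
`g` moving `x` and `y` by at most `ε` maps `u` and `v` back into `[x, y]`, with `g • u` within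
`2ε` of `x` and `g • v` at distance `k + 1` from `g • u`, on either side of it. By
`k`-acylindricity `g` is determined by `(g • u, g • v)`, since `d(u, v) > k`, and these pairs are
recorded by their distances from `x`: at most `2ε + 1` of them with `g • v` beyond `g • u` and,
as then `g • u` cannot be `x`, at most `2ε` with `g • v` before `g • u`.
-/

open Set

namespace SimpleGraph

variable {V V' : Type*} {G : SimpleGraph V} {a b a' b' m n : V}

/-- The vertices lying on some geodesic from `a` to `b`. -/
def interval (G : SimpleGraph V) (a b : V) : Set V :=
  {m | G.dist a m + G.dist m b = G.dist a b}

lemma mem_interval : m ∈ G.interval a b ↔ G.dist a m + G.dist m b = G.dist a b := Iff.rfl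

lemma interval_comm : G.interval a b = G.interval b a := by
  ext m
  rw [mem_interval, mem_interval, dist_comm (u := b) (v := m), dist_comm (u := m) (v := a),
    dist_comm (u := b) (v := a), add_comm]

lemma Walk.mem_interval_of_mem_support {p : G.Walk a b} (hp : p.length = G.dist a b)
    (hm : m ∈ p.support) : m ∈ G.interval a b := by
  classical
  have htake := dist_le (p.takeUntil m hm)
  have hdrop := dist_le (p.dropUntil m hm)
  have hsplit := congrArg Walk.length (p.take_spec hm)
  have htri := (p.takeUntil m hm).reachable.dist_triangle_left b
  rw [Walk.length_append] at hsplit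
  rw [mem_interval]
  omega

lemma Connected.exists_mem_interval_dist_eq (hG : G.Connected) {i : ℕ} (hi : i ≤ G.dist a b) :
    ∃ m ∈ G.interval a b, G.dist a m = i := by
  obtain ⟨p, hp⟩ := hG.exists_walk_length_eq_dist a b
  have hm := p.mem_interval_of_mem_support hp (p.getVert_mem_support i)
  have htake := dist_le (p.take i)
  have hdrop := dist_le (p.drop i)
  rw [Walk.take_length] at htake
  rw [Walk.drop_length] at hdrop
  rw [mem_interval] at hm
  exact ⟨_, hm, by omega⟩

lemma IsAcyclic.support_subset_support_of_isPath (hG : G.IsAcyclic) {p : G.Walk a b}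
    (hp : p.IsPath) (q : G.Walk a b) : p.support ⊆ q.support := by
  classical
  have hpq : (⟨p, hp⟩ : G.Path a b) = q.toPath := (hG.subsingleton_path a b).elim _ _
  rw [show p = q.bypass from congrArg Subtype.val hpq]
  exact q.support_bypass_subset_support

lemma IsTree.mem_support_of_mem_interval (hG : G.IsTree) (hm : m ∈ G.interval a b)
    (q : G.Walk a b) : m ∈ q.support := by
  obtain ⟨r, hr⟩ := hG.connected.exists_walk_length_eq_dist a m
  obtain ⟨s, hs⟩ := hG.connected.exists_walk_length_eq_dist m b
  have hrs : (r.append s).length = G.dist a b := by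
    rw [Walk.length_append, hr, hs]
    exact hm
  refine hG.isAcyclic.support_subset_support_of_isPath
    ((r.append s).isPath_of_length_eq_dist hrs) q ?_
  exact (Walk.mem_support_append_iff r s).mpr (Or.inl r.end_mem_support)

/-- The walk `c → a → b` passes through `m`, and it cannot do so on its way from `c` to `a`
unless `m = c`. -/
lemma IsTree.mem_interval_of_dist_le (hG : G.IsTree) {c : V} (hm : m ∈ G.interval a b)
    (hc : G.dist a c ≤ G.dist a m) : m ∈ G.interval c b := by
  obtain ⟨r, hr⟩ := hG.connected.exists_walk_length_eq_dist a c
  obtain ⟨q, hq⟩ := hG.connected.exists_walk_length_eq_dist c b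
  rcases (Walk.mem_support_append_iff r q).mp (hG.mem_support_of_mem_interval hm _) with
    hmr | hmq
  · have hmc := mem_interval.mp (r.mem_interval_of_mem_support hr hmr)
    obtain rfl : m = c := (hG.connected.dist_eq_zero_iff).mp (by omega)
    simp [mem_interval]
  · exact q.mem_interval_of_mem_support hq hmq

lemma IsTree.mem_interval_of_mem_interval_of_dist_le (hG : G.IsTree) (hm : m ∈ G.interval a b)
    (hn : n ∈ G.interval a b) (hle : G.dist a m ≤ G.dist a n) : m ∈ G.interval a n := by
  have hnm : G.dist b n ≤ G.dist b m := by
    rw [mem_interval] at hm hn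
    rw [dist_comm (u := b) (v := n), dist_comm (u := b) (v := m)]
    omega
  rw [interval_comm] at hm ⊢
  exact hG.mem_interval_of_dist_le hm hnm

lemma IsTree.eq_of_mem_interval_of_dist_eq (hG : G.IsTree) (hm : m ∈ G.interval a b)
    (hn : n ∈ G.interval a b) (h : G.dist a m = G.dist a n) : m = n := by
  have hmn := mem_interval.mp (hG.mem_interval_of_mem_interval_of_dist_le hm hn h.le)
  exact (hG.connected.dist_eq_zero_iff).mp (by omega)

lemma IsTree.dist_eq_add_or_dist_eq_add (hG : G.IsTree) (hm : m ∈ G.interval a b)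
    (hn : n ∈ G.interval a b) :
    G.dist a n = G.dist a m + G.dist m n ∨ G.dist a m = G.dist a n + G.dist m n := by
  rcases le_total (G.dist a m) (G.dist a n) with h | h
  · exact Or.inl (mem_interval.mp (hG.mem_interval_of_mem_interval_of_dist_le hm hn h)).symm
  · have hnm := mem_interval.mp (hG.mem_interval_of_mem_interval_of_dist_le hn hm h)
    rw [dist_comm (u := n)] at hnm
    exact Or.inr hnm.symm

lemma IsTree.mem_interval_of_dist_le_of_dist_le (hG : G.IsTree) (hm : m ∈ G.interval a b)
    (ha : G.dist a a' ≤ G.dist a m) (hb : G.dist b b' ≤ G.dist m b) : m ∈ G.interval a' b' := by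
  have hm' := hG.mem_interval_of_dist_le hm ha
  rw [interval_comm] at hm' ⊢
  exact hG.mem_interval_of_dist_le hm' (by rwa [dist_comm (u := b) (v := m)])

lemma Hom.dist_map_le {G' : SimpleGraph V'} (f : G →g G') (h : G.Reachable a b) :
    G'.dist (f a) (f b) ≤ G.dist a b := by
  obtain ⟨p, hp⟩ := h.exists_walk_length_eq_dist
  simpa only [Walk.length_map, hp] using dist_le (p.map f)

lemma Iso.dist_map {G' : SimpleGraph V'} (φ : G ≃g G') (a b : V) :
    G'.dist (φ a) (φ b) = G.dist a b := by
  by_cases h : G.Reachable a b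
  · refine le_antisymm (φ.toHom.dist_map_le h) ?_
    simpa using φ.symm.toHom.dist_map_le (a := φ a) (b := φ b) (Iso.reachable_iff.mpr h)
  · rw [dist_eq_zero_of_not_reachable h,
      dist_eq_zero_of_not_reachable (mt Iso.reachable_iff.mp h)]

end SimpleGraph

/-- The pairs `(i, j)` with `i ≤ N` and `|i - j| = r`. -/
def pairsAtDist (N r : ℕ) : Finset (ℕ × ℕ) :=
  (Finset.range (N + 1)).image (fun i => (i, i + r)) ∪
    (Finset.range N).image (fun j => (j + r, j))

lemma mk_mem_pairsAtDist {N r i j : ℕ} (hi : i ≤ N) (h : j = i + r ∨ i = j + r) :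
    (i, j) ∈ pairsAtDist N r := by
  simp only [pairsAtDist, Finset.mem_union, Finset.mem_image, Finset.mem_range, Prod.mk.injEq]
  rcases h with rfl | rfl
  · exact Or.inl ⟨i, by omega, rfl, rfl⟩
  · rcases Nat.eq_zero_or_pos r with rfl | hr
    · exact Or.inl ⟨j, by omega, rfl, rfl⟩
    · exact Or.inr ⟨j, by omega, rfl, rfl⟩

lemma card_pairsAtDist_le (N r : ℕ) : (pairsAtDist N r).card ≤ 2 * N + 1 := by
  refine (Finset.card_union_le _ _).trans ?_
  have h₁ := (Finset.range (N + 1)).card_image_le (f := fun i => (i, i + r))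
  have h₂ := (Finset.range N).card_image_le (f := fun j => (j + r, j))
  rw [Finset.card_range] at h₁ h₂
  omega

open SimpleGraph

section TreeAction

variable {V G : Type*} [Group G] [MulAction G V] {T : SimpleGraph V}

lemma dist_smul_smul (haut : ∀ (g : G) (a b : V), T.Adj (g • a) (g • b) ↔ T.Adj a b)
    (g : G) (a b : V) : T.dist (g • a) (g • b) = T.dist a b :=
  Iso.dist_map ⟨MulAction.toPerm g, haut g _ _⟩ a b

lemma dist_smul_le_add (hT : T.Connected)
    (haut : ∀ (g : G) (a b : V), T.Adj (g • a) (g • b) ↔ T.Adj a b) (g : G) (x u : V) :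
    T.dist x (g • u) ≤ T.dist (g • x) x + T.dist x u := by
  have htri := hT.dist_triangle (u := x) (v := g • x) (w := g • u)
  rwa [dist_smul_smul haut, SimpleGraph.dist_comm (u := x) (v := g • x)] at htri

lemma smul_mem_interval (hT : T.IsTree)
    (haut : ∀ (g : G) (a b : V), T.Adj (g • a) (g • b) ↔ T.Adj a b) {g : G} {x y u : V}
    (hu : u ∈ T.interval x y) (hx : T.dist (g • x) x ≤ T.dist x u)
    (hy : T.dist (g • y) y ≤ T.dist u y) : g • u ∈ T.interval x y := by
  have hgu : g • u ∈ T.interval (g • x) (g • y) := by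
    rwa [mem_interval, dist_smul_smul haut, dist_smul_smul haut, dist_smul_smul haut]
  exact hT.mem_interval_of_dist_le_of_dist_le hgu (by rwa [dist_smul_smul haut])
    (by rwa [dist_smul_smul haut])

lemma eq_of_smul_eq_of_smul_eq {k : ℕ}
    (hacyl : ∀ g : G, g ≠ 1 → ∀ a b : V, g • a = a → g • b = b → T.dist a b ≤ k)
    {g h : G} {u v : V} (huv : k < T.dist u v) (hu : g • u = h • u) (hv : g • v = h • v) :
    g = h := by
  by_contra hne
  have hfix : ∀ w : V, g • w = h • w → (g⁻¹ * h) • w = w := by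
    intro w hw
    rw [mul_smul, ← hw, inv_smul_smul]
  exact absurd (hacyl _ (fun h1 => hne (inv_mul_eq_one.mp h1)) u v (hfix u hu) (hfix v hv))
    (not_le.mpr huv)

lemma mapsTo_dist_smul_pairsAtDist (hT : T.IsTree)
    (haut : ∀ (g : G) (a b : V), T.Adj (g • a) (g • b) ↔ T.Adj a b) {S : Set G} {x y u v : V}
    {N : ℕ} (hS : ∀ g ∈ S, g • u ∈ T.interval x y ∧ g • v ∈ T.interval x y ∧
      T.dist x (g • u) ≤ N) :
    MapsTo (fun g : G => (T.dist x (g • u), T.dist x (g • v))) S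
      (pairsAtDist N (T.dist u v)) := by
  intro g hg
  obtain ⟨hgu, hgv, hxgu⟩ := hS g hg
  refine mk_mem_pairsAtDist hxgu ?_
  rw [← dist_smul_smul haut g u v]
  exact hT.dist_eq_add_or_dist_eq_add hgu hgv

lemma injOn_dist_smul {k : ℕ} (hT : T.IsTree)
    (hacyl : ∀ g : G, g ≠ 1 → ∀ a b : V, g • a = a → g • b = b → T.dist a b ≤ k)
    {S : Set G} {x y u v : V} (huv : k < T.dist u v)
    (hS : ∀ g ∈ S, g • u ∈ T.interval x y ∧ g • v ∈ T.interval x y) :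
    InjOn (fun g : G => (T.dist x (g • u), T.dist x (g • v))) S := by
  intro g hg h hh hgh
  exact eq_of_smul_eq_of_smul_eq hacyl huv
    (hT.eq_of_mem_interval_of_dist_eq (hS g hg).1 (hS h hh).1 (congrArg Prod.fst hgh))
    (hT.eq_of_mem_interval_of_dist_eq (hS g hg).2 (hS h hh).2 (congrArg Prod.snd hgh))

end TreeAction

/-- a `k`-acylindrical (in the sense of Sela) action on a tree is acylindrical:
points at distance more than `k + 2ε + 2` have pointwise ε-stabilizer of size
less than `2(2ε+1)`. -/
theorem stmt_9 {V G : Type*} [Group G] [MulAction G V] (T : SimpleGraph V)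
    (hT : T.IsTree)
    (haut : ∀ (g : G) (a b : V), T.Adj (g • a) (g • b) ↔ T.Adj a b)
    (k : ℕ)
    (hacyl : ∀ g : G, g ≠ 1 → ∀ a b : V, g • a = a → g • b = b → T.dist a b ≤ k) :
    ∀ ε : ℕ, ∀ x y : V, k + 2 * ε + 2 < T.dist x y →
      {g : G | T.dist (g • x) x ≤ ε ∧ T.dist (g • y) y ≤ ε}.Finite ∧
      Set.ncard {g : G | T.dist (g • x) x ≤ ε ∧ T.dist (g • y) y ≤ ε} < 2 * (2 * ε + 1) := by
  intro ε x y hxy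
  obtain ⟨u, hu, hxu⟩ :=
    hT.connected.exists_mem_interval_dist_eq (a := x) (b := y) (i := ε) (by omega)
  obtain ⟨v, hv, hxv⟩ :=
    hT.connected.exists_mem_interval_dist_eq (a := x) (b := y) (i := ε + (k + 1)) (by omega)
  have huv : T.dist u v = k + 1 := by
    have := mem_interval.mp (hT.mem_interval_of_mem_interval_of_dist_le hu hv (by omega))
    omega
  set S := {g : G | T.dist (g • x) x ≤ ε ∧ T.dist (g • y) y ≤ ε}
  have hpos : ∀ g ∈ S, g • u ∈ T.interval x y ∧ g • v ∈ T.interval x y ∧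
      T.dist x (g • u) ≤ 2 * ε := by
    intro g ⟨hgx, hgy⟩
    rw [mem_interval] at hu hv
    exact ⟨smul_mem_interval hT haut hu (by omega) (by omega),
      smul_mem_interval hT haut hv (by omega) (by omega),
      (dist_smul_le_add hT.connected haut g x u).trans (by omega)⟩
  have hmaps := mapsTo_dist_smul_pairsAtDist hT haut hpos
  have hinj := injOn_dist_smul hT hacyl (huv ▸ lt_add_one k) fun g hg =>
    (hpos g hg).imp_right And.left
  rw [huv] at hmaps
  refine ⟨.of_injOn hmaps hinj (Finset.finite_toSet _), ?_⟩
  calc S.ncard ≤ (pairsAtDist (2 * ε) (k + 1)).card := by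
        rw [← ncard_coe_finset]
        exact ncard_le_ncard_of_injOn _ hmaps hinj (Finset.finite_toSet _)
    _ < 2 * (2 * ε + 1) := (card_pairsAtDist_le _ _).trans_lt (by omega)
end

section
/- Let k ∈ ℕ and let a group G act on a simplicial tree T by graph automorphisms, without inversions (no element of G swaps a pair of adjacent vertices) and k-acylindrically in the sense of Sela. Suppose G contains a hyperbolic element. Then every finite normal subgroup of G is trivial. -/
/-!
An automorphism `φ` of a tree with no fixed vertex and no inverted edge is a translation along
an axis: if `x` has minimal displacement `ℓ = d(x, φ x)`, then `ℓ ≥ 1` and the geodesics from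
`φⁱ x` to `φⁱ⁺¹ x` concatenate without backtracking, so `d(x, φⁿ x) = n ℓ`. Hence an element of
`G` one of whose powers has a bounded orbit, in particular an element of finite order, fixes a
vertex.

Now let `g ≠ 1` lie in a finite normal subgroup `N` and let `h` be hyperbolic. Conjugation by `h`
permutes the finite set `N`, so some power `h ^ p` commutes with `g`. Being of finite order, `g`
fixes a vertex `x`, hence also every `h ^ (p * n) • x`; acylindricity then bounds
`d(x, h ^ (p * n) • x)` by `k`, which forces `h` to fix a vertex.
-/

namespace SimpleGraph

section Graph

variable {V V' : Type*} {G : SimpleGraph V} {G' : SimpleGraph V'}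

lemma Hom.dist_le (φ : G →g G') {u v : V} (h : G.Reachable u v) :
    G'.dist (φ u) (φ v) ≤ G.dist u v := by
  obtain ⟨p, hp⟩ := h.exists_walk_length_eq_dist
  calc G'.dist (φ u) (φ v) ≤ (p.map φ).length := SimpleGraph.dist_le _
    _ = G.dist u v := by rw [Walk.length_map, hp]

lemma Iso.dist_eq (e : G ≃g G') (u v : V) : G'.dist (e u) (e v) = G.dist u v := by
  by_cases h : G.Reachable u v
  · refine le_antisymm (e.toHom.dist_le h) ?_
    simpa using e.symm.toHom.dist_le (h.map e.toHom)
  · have h' : ¬G'.Reachable (e u) (e v) := fun h' => h (by simpa using h'.map e.symm.toHom)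
    rw [dist_eq_zero_of_not_reachable h, dist_eq_zero_of_not_reachable h']

namespace Walk

lemma snd_map (φ : G →g G') {u v : V} (p : G.Walk u v) : (p.map φ).snd = φ p.snd :=
  getVert_map _ _ 1

lemma snd_append {u v w : V} {p : G.Walk u v} (hp : ¬p.Nil) (q : G.Walk v w) :
    (p.append q).snd = p.snd := by
  cases p with
  | nil => exact absurd Nil.nil hp
  | cons h p => rw [cons_append, snd_cons, snd_cons]

lemma dist_snd_penultimate_le {u v : V} (p : G.Walk u v) (hp : 2 ≤ p.length) :
    G.dist p.snd p.penultimate ≤ p.length - 2 := by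
  have htail : p.tail.length + 1 = p.length :=
    length_tail_add_one (by rw [← length_eq_zero_iff]; omega)
  have hpen : p.tail.penultimate = p.penultimate := by
    simp only [penultimate, getVert_tail]
    congr 1
    omega
  calc G.dist p.snd p.penultimate = G.dist p.snd p.tail.penultimate := by rw [hpen]
    _ ≤ p.tail.dropLast.length := dist_le _
    _ = p.length - 2 := by rw [length_dropLast]; omega

end Walk

lemma IsAcyclic.isPath_append (hG : G.IsAcyclic) {u v w : V} {p : G.Walk u v}
    {q : G.Walk v w} (hp : p.IsPath) (hq : q.IsPath)
    (hpq : ¬p.Nil → ¬q.Nil → p.penultimate ≠ q.snd) : (p.append q).IsPath := by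
  rw [hG.isPath_iff_isChain, Walk.edges_append, List.isChain_append]
  refine ⟨(hG.isPath_iff_isChain p).1 hp, (hG.isPath_iff_isChain q).1 hq, ?_⟩
  intro e he e' he'
  cases q with
  | nil => simp at he'
  | cons h q =>
    by_cases hpn : p.Nil
    · simp [Walk.edges_eq_nil.2 hpn] at he
    · rw [List.getLast?_eq_some_getLast (Walk.edges_eq_nil.not.2 hpn), Option.mem_some_iff,
        Walk.getLast_edges_eq_mk_penultimate_end] at he
      simp only [Walk.edges_cons, List.head?_cons, Option.mem_some_iff] at he'
      subst he he'
      have hne := hpq hpn Walk.not_nil_cons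
      have hpen := (Walk.adj_penultimate hpn).ne
      rw [Walk.snd_cons] at hne
      rw [Ne, Sym2.eq_iff]
      tauto

lemma IsTree.length_eq_dist_of_isPath (hG : G.IsTree) {u v : V} {p : G.Walk u v}
    (hp : p.IsPath) : p.length = G.dist u v := by
  obtain ⟨q, hq, hql⟩ := hG.connected.exists_path_of_dist u v
  rw [(hG.existsUnique_path u v).unique hp hq, hql]

namespace IsTree

variable {T : SimpleGraph V} {φ : T ≃g T}

/-- If the geodesic from `φ x` to `φ (φ x)`, which is the image of `p` under `φ`, backtracked
along `p`, then `φ` would map the second vertex of `p` to its penultimate one, a displacement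
of `ℓ - 2`; for `ℓ = 1` this means that `φ` inverts the edge `p`. -/
lemma penultimate_ne_snd_of_forall_dist_le (hT : T.IsTree)
    (hinv : ∀ a b, T.Adj a b → ¬(φ a = b ∧ φ b = a)) {x : V} (hx : φ x ≠ x)
    (hmin : ∀ v, T.dist x (φ x) ≤ T.dist v (φ v)) {p : T.Walk x (φ x)}
    {q : T.Walk (φ x) (φ (φ x))} (hp : p.IsPath) (hq : q.IsPath) :
    p.penultimate ≠ q.snd := by
  have hqp : q = p.map φ.toHom := (hT.existsUnique_path _ _).unique hq (hp.map φ.injective)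
  have hlen := hT.length_eq_dist_of_isPath hp
  intro hpq
  rw [hqp, Walk.snd_map] at hpq
  change p.penultimate = φ p.snd at hpq
  obtain hℓ | hℓ | hℓ : p.length = 0 ∨ p.length = 1 ∨ 2 ≤ p.length := by omega
  · exact hx (Walk.eq_of_length_eq_zero hℓ).symm
  · have hadj : T.Adj x (φ x) := by rw [← dist_eq_one_iff_adj, ← hlen, hℓ]
    have hsnd : p.snd = φ x := by rw [Walk.snd, ← hℓ, Walk.getVert_length]
    have hpen : p.penultimate = x := by rw [Walk.penultimate, hℓ, Walk.getVert_zero]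
    rw [hsnd, hpen] at hpq
    exact hinv x (φ x) hadj ⟨rfl, hpq.symm⟩
  · have hdisp := hmin p.snd
    have hshort := p.dist_snd_penultimate_le hℓ
    rw [hpq] at hshort
    omega

theorem exists_dist_iterate_eq_mul (hT : T.IsTree)
    (hinv : ∀ a b, T.Adj a b → ¬(φ a = b ∧ φ b = a)) (hfree : ∀ v, φ v ≠ v) :
    ∃ y ℓ, 0 < ℓ ∧ ∀ n, T.dist y (φ^[n] y) = n * ℓ := by
  have : Nonempty V := hT.connected.nonempty
  obtain ⟨x, hmin⟩ : ∃ x, ∀ v, T.dist x (φ x) ≤ T.dist v (φ v) :=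
    ⟨_, fun v => Function.argmin_le (fun v => T.dist v (φ v)) v⟩
  set ℓ := T.dist x (φ x)
  choose Q hQ hQlen using fun v => hT.connected.exists_path_of_dist v (φ v)
  have hQnil : ∀ v, ¬(Q v).Nil := fun v h => hfree v h.eq.symm
  have axis : ∀ n v, T.dist v (φ v) = ℓ → ∃ p : T.Walk v (φ^[n] v),
      p.IsPath ∧ p.length = n * ℓ ∧ (n ≠ 0 → p.snd = (Q v).snd) := by
    intro n
    induction n with
    | zero => exact fun v _ => ⟨Walk.nil, Walk.IsPath.nil, by simp, fun h => absurd rfl h⟩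
    | succ n ih =>
      intro v hv
      obtain ⟨p, hp, hplen, hpsnd⟩ : ∃ p : T.Walk (φ v) (φ^[n + 1] v),
          p.IsPath ∧ p.length = n * ℓ ∧ (n ≠ 0 → p.snd = (Q (φ v)).snd) :=
        ih (φ v) (by rw [φ.dist_eq]; exact hv)
      refine ⟨(Q v).append p, hT.isAcyclic.isPath_append (hQ v) hp fun _ hpn => ?_, ?_,
        fun _ => Walk.snd_append (hQnil v) p⟩
      · rw [hpsnd fun hn => hpn (Walk.length_eq_zero_iff.1 (by rw [hplen, hn, zero_mul]))]
        exact penultimate_ne_snd_of_forall_dist_le hT hinv (hfree v) (hv ▸ hmin) (hQ v)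
          (hQ (φ v))
      · rw [Walk.length_append, hplen, hQlen, hv]
        ring
  refine ⟨x, ℓ, hT.connected.pos_dist_of_ne (hfree x).symm, fun n => ?_⟩
  obtain ⟨p, hp, hplen, -⟩ := axis n x rfl
  rw [← hT.length_eq_dist_of_isPath hp, hplen]

end IsTree

end Graph

section Action

variable {V G : Type*} [Group G] [MulAction G V] {T : SimpleGraph V}

def smulIso (haut : ∀ (g : G) (a b : V), T.Adj (g • a) (g • b) ↔ T.Adj a b) (g : G) :
    T ≃g T :=
  ⟨MulAction.toPerm g, haut g _ _⟩

lemma coe_smulIso (haut : ∀ (g : G) (a b : V), T.Adj (g • a) (g • b) ↔ T.Adj a b) (g : G) :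
    ⇑(smulIso haut g) = (g • ·) :=
  rfl

lemma dist_smul (haut : ∀ (g : G) (a b : V), T.Adj (g • a) (g • b) ↔ T.Adj a b) (g : G)
    (a b : V) : T.dist (g • a) (g • b) = T.dist a b :=
  (smulIso haut g).dist_eq a b

lemma exists_smul_eq_of_dist_pow_mul_smul_le (hT : T.IsTree)
    (haut : ∀ (g : G) (a b : V), T.Adj (g • a) (g • b) ↔ T.Adj a b)
    (hnoinv : ∀ (g : G) (a b : V), T.Adj a b → ¬(g • a = b ∧ g • b = a))
    {f : G} {x : V} {p K : ℕ} (hp : 0 < p) (hK : ∀ n, T.dist x ((f ^ (p * n)) • x) ≤ K) :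
    ∃ v : V, f • v = v := by
  by_contra! hfree
  obtain ⟨y, ℓ, hℓ, hy⟩ :=
    hT.exists_dist_iterate_eq_mul (φ := smulIso haut f) (hnoinv f) hfree
  set n := 2 * T.dist y x + K + 1
  have hlin : T.dist y ((f ^ (p * n)) • y) = p * n * ℓ := by
    simpa only [coe_smulIso, smul_iterate_apply] using hy (p * n)
  have hmove : T.dist ((f ^ (p * n)) • x) ((f ^ (p * n)) • y) = T.dist y x := by
    rw [dist_smul haut, dist_comm]
  have htri₁ := hT.connected.dist_triangle (u := y) (v := x) (w := (f ^ (p * n)) • y)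
  have htri₂ := hT.connected.dist_triangle (u := x) (v := (f ^ (p * n)) • x)
    (w := (f ^ (p * n)) • y)
  have hn : n ≤ p * n * ℓ := (Nat.le_mul_of_pos_right _ hℓ).trans' (Nat.le_mul_of_pos_left n hp)
  have := hK n
  omega

lemma exists_smul_eq_of_isOfFinOrder (hT : T.IsTree)
    (haut : ∀ (g : G) (a b : V), T.Adj (g • a) (g • b) ↔ T.Adj a b)
    (hnoinv : ∀ (g : G) (a b : V), T.Adj a b → ¬(g • a = b ∧ g • b = a))
    {g : G} (hg : IsOfFinOrder g) : ∃ v : V, g • v = v := by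
  obtain ⟨x⟩ := hT.connected.nonempty
  refine exists_smul_eq_of_dist_pow_mul_smul_le hT haut hnoinv (x := x) (K := 0)
    hg.orderOf_pos fun n => ?_
  rw [pow_mul, pow_orderOf_eq_one, one_pow, one_smul, dist_self]

end Action

end SimpleGraph

lemma Subgroup.exists_pow_mem_centralizer_of_finite {G : Type*} [Group G] (N : Subgroup G)
    [N.Normal] [Finite N] (h : G) : ∃ p, 0 < p ∧ h ^ p ∈ Subgroup.centralizer (N : Set G) := by
  set σ := MulAut.conjNormal (H := N) h
  refine ⟨orderOf σ, (isOfFinOrder_of_finite σ).orderOf_pos, ?_⟩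
  rw [Subgroup.mem_centralizer_iff]
  intro n hn
  have hconj := congrArg (fun τ : MulAut N => (τ ⟨n, hn⟩ : G)) (pow_orderOf_eq_one σ)
  rw [← map_pow] at hconj
  simp only [MulAut.conjNormal_apply, MulAut.one_apply] at hconj
  exact (mul_inv_eq_iff_eq_mul.1 hconj).symm

/-- for a `k`-acylindrical (in the sense of Sela) action without inversions
on a tree, if `G` contains a hyperbolic element then every finite normal subgroup of `G`
is trivial. -/
theorem stmt_10 {V G : Type*} [Group G] [MulAction G V] (T : SimpleGraph V)
    (hT : T.IsTree)
    (haut : ∀ (g : G) (a b : V), T.Adj (g • a) (g • b) ↔ T.Adj a b)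
    (k : ℕ)
    (hnoinv : ∀ (g : G) (a b : V), T.Adj a b → ¬ (g • a = b ∧ g • b = a))
    (hacyl : ∀ g : G, g ≠ 1 → ∀ a b : V, g • a = a → g • b = b → T.dist a b ≤ k)
    (hhyp : ∃ h : G, ¬ ∃ w : V, h • w = w) :
    ∀ N : Subgroup G, N.Normal → (N : Set G).Finite → N = ⊥ := by
  intro N hN hfin
  have : Finite N := hfin.to_subtype
  rw [Subgroup.eq_bot_iff_forall]
  intro g hg
  by_contra hg1
  obtain ⟨h, hh⟩ := hhyp
  obtain ⟨p, hp, hcent⟩ := N.exists_pow_mem_centralizer_of_finite h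
  obtain ⟨x, hx⟩ : ∃ x : V, g • x = x := SimpleGraph.exists_smul_eq_of_isOfFinOrder hT haut
    hnoinv (N.subtype.isOfFinOrder (isOfFinOrder_of_finite (⟨g, hg⟩ : N)))
  refine hh (SimpleGraph.exists_smul_eq_of_dist_pow_mul_smul_le hT haut hnoinv hp
    fun n => hacyl g hg1 x _ hx ?_)
  have hcomm : Commute g (h ^ (p * n)) := by
    rw [pow_mul]
    exact Commute.pow_right (Subgroup.mem_centralizer_iff.1 hcent g hg) n
  rw [smul_smul, hcomm.eq, mul_smul, hx]
end
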